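/- For all positive integers m and all nonnegative integers n, there exists an involution \phi on the set of improper forests of m colored binary trees with n internal vertices in total, such that \phi changes the color number of each such forest by exactly 1 (hence reverses its parity). Consequently, the number of forests of m colored binary trees with n internal vertices and even color number, minus the number of such forests with odd color number, equals the number of proper forests of m colored binary trees with n internal vertices. -/

import Mathlib

/-- A complete binary tree: every internal vertex has exactly a left and a right child. -/
inductive BinTree : Type
  | leaf : BinTree
  | node : BinTree → BinTree → BinTree

namespace BinTree

/-- The number of internal vertices of a complete binary tree. -/
def internals : BinTree → ℕ
  | leaf => 0
  | node l r => internals l + internals r + 1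

/-- The subtree rooted at the vertex reached from the root by the given path,
where `false` means "go to the left child" and `true` means "go to the right child";
`none` if there is no such vertex. -/
def subtreeAt : BinTree → List Bool → Option BinTree
  | t, [] => some t
  | leaf, _ :: _ => none
  | node l _, false :: p => subtreeAt l p
  | node _ r, true :: p => subtreeAt r p

/-- The list of (the paths from the root to) all vertices of a complete binary tree. -/
def vertices : BinTree → List (List Bool)
  | leaf => [[]]
  | node l r =>
      [] :: ((vertices l).map (List.cons false) ++ (vertices r).map (List.cons true))

/-- The length of the maximal L-path starting at the root, i.e. the length of the
leftmost path of the tree. -/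
def leftLen : BinTree → ℕ
  | leaf => 0
  | node l _ => leftLen l + 1

/-- `p` is (the path from the root to) an *initial vertex* of `t`: it is a vertex of `t`
which is not the left child of its father (it is the root or a right child), so it is the
starting vertex of a maximal L-path. -/
def IsInitial (t : BinTree) (p : List Bool) : Prop :=
  (subtreeAt t p).isSome ∧ (p = [] ∨ p.getLast? = some true)

/-- The length `l(v)` of the associated maximal L-path of the vertex `v` at path `p`
(junk value `0` if `p` is not a vertex of `t`). -/
def pathLen (t : BinTree) (p : List Bool) : ℕ :=
  match subtreeAt t p with
  | some s => leftLen s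
  | none => 0

end BinTree

/-- A colored binary tree: a complete binary tree together with an assignment of a color
`c(v)` with `0 ≤ c(v) ≤ ⌊l(v)/2⌋` to each initial vertex `v` (vertices which are not
initial carry the junk color `0`). -/
structure ColoredBinTree : Type where
  /-- the underlying complete binary tree -/
  tree : BinTree
  /-- the color of each vertex (indexed by the path from the root) -/
  color : List Bool → ℕ
  color_le : ∀ p, BinTree.IsInitial tree p → color p ≤ BinTree.pathLen tree p / 2
  color_eq_zero : ∀ p, ¬ BinTree.IsInitial tree p → color p = 0

namespace ColoredBinTree

/-- The color number of a colored binary tree: the sum of the colors of its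
initial vertices. -/
def colorNum (B : ColoredBinTree) : ℕ :=
  ((B.tree.vertices).map B.color).sum

/-- The initial vertex at path `p` is *proper*: its color is `2k` and the length of its
associated maximal L-path is `4k` or `4k+1` for some nonnegative integer `k`. -/
def ProperAt (B : ColoredBinTree) (p : List Bool) : Prop :=
  ∃ k : ℕ, B.color p = 2 * k ∧
    (BinTree.pathLen B.tree p = 4 * k ∨ BinTree.pathLen B.tree p = 4 * k + 1)

/-- A colored binary tree is *proper* if all its initial vertices are proper. -/
def Proper (B : ColoredBinTree) : Prop :=
  ∀ p, BinTree.IsInitial B.tree p → B.ProperAt p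

end ColoredBinTree

/-!
Order the vertices of each tree and flip the parity of the color of the first
improper initial vertex of the first improper component: an even color `c` becomes `c + 1`,
an odd one `c - 1`. An improper vertex has color `c ≤ ⌊l/2⌋` with `c` odd or `c ≠ ⌊l/2⌋`,
so the new color is still admissible and the vertex stays improper; since properness of the
other vertices is untouched, the same vertex is flipped back the second time. Proper forests
have even color number, so they account for the whole signed count.
-/

open Function

section UpdateFirst

variable {ι α : Type*} [DecidableEq ι] {l : List ι} {bad : ι → α → Prop}
  [∀ i a, Decidable (bad i a)] {g : ι → α → α}

variable (l bad g) in
def updateFirst (f : ι → α) : ι → α :=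
  match l.find? (fun i => bad i (f i)) with
  | none => f
  | some i => update f i (g i (f i))

theorem updateFirst_of_find?_eq_none {f : ι → α} (h : l.find? (fun i => bad i (f i)) = none) :
    updateFirst l bad g f = f := by
  simp only [updateFirst, h]

theorem updateFirst_of_find?_eq_some {f : ι → α} {i : ι}
    (h : l.find? (fun i => bad i (f i)) = some i) :
    updateFirst l bad g f = update f i (g i (f i)) := by
  simp only [updateFirst, h]

variable (l bad g) in
theorem updateFirst_apply_eq_or (f : ι → α) (i : ι) :
    updateFirst l bad g f i = f i ∨ bad i (f i) ∧ updateFirst l bad g f i = g i (f i) := by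
  cases hfind : l.find? (fun i => bad i (f i)) with
  | none => exact Or.inl (by rw [updateFirst_of_find?_eq_none hfind])
  | some j =>
      rw [updateFirst_of_find?_eq_some hfind]
      rcases eq_or_ne i j with rfl | hne
      · exact Or.inr ⟨by simpa using List.find?_some hfind, update_self ..⟩
      · exact Or.inl (update_of_ne hne ..)

theorem exists_updateFirst_eq_update {f : ι → α} (h : ∃ i ∈ l, bad i (f i)) :
    ∃ i ∈ l, bad i (f i) ∧ updateFirst l bad g f = update f i (g i (f i)) := by
  cases hfind : l.find? (fun i => bad i (f i)) with
  | none =>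
      obtain ⟨i, hi, hbad⟩ := h
      exact absurd (decide_eq_true hbad) (List.find?_eq_none.mp hfind i hi)
  | some i =>
      exact ⟨i, List.mem_of_find?_eq_some hfind, by simpa using List.find?_some hfind,
        updateFirst_of_find?_eq_some hfind⟩

section

variable (hbad : ∀ i a, bad i a → bad i (g i a))
include hbad

theorem bad_updateFirst_iff (f : ι → α) (i : ι) :
    bad i (updateFirst l bad g f i) ↔ bad i (f i) := by
  rcases updateFirst_apply_eq_or l bad g f i with h | ⟨hi, h⟩ <;> rw [h]
  exact iff_of_true (hbad i _ hi) hi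

theorem updateFirst_updateFirst (hg : ∀ i a, bad i a → g i (g i a) = a) (f : ι → α) :
    updateFirst l bad g (updateFirst l bad g f) = f := by
  have hfind : l.find? (fun i => bad i (updateFirst l bad g f i)) =
      l.find? (fun i => bad i (f i)) := by
    simp only [bad_updateFirst_iff hbad]
  cases hf : l.find? (fun i => bad i (f i)) with
  | none =>
      rw [updateFirst_of_find?_eq_none (hfind.trans hf), updateFirst_of_find?_eq_none hf]
  | some i =>
      have hi : bad i (f i) := by simpa using List.find?_some hf
      rw [updateFirst_of_find?_eq_some (hfind.trans hf), updateFirst_of_find?_eq_some hf,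
        update_self, update_idem, hg i _ hi, update_eq_self]

end

end UpdateFirst

theorem sum_update_eq_add_one_or {ι : Type*} [DecidableEq ι] {s : Finset ι} {i : ι}
    (hi : i ∈ s) (f : ι → ℕ) {b : ℕ} (hb : b = f i + 1 ∨ f i = b + 1) :
    ∑ j ∈ s, update f i b j = ∑ j ∈ s, f j + 1 ∨ ∑ j ∈ s, f j = ∑ j ∈ s, update f i b j + 1 := by
  rw [Finset.sum_update_of_mem hi, Finset.sum_eq_add_sum_sdiff_singleton_of_mem hi f]
  omega

def flipParity (c : ℕ) : ℕ := if Even c then c + 1 else c - 1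

theorem flipParity_eq_add_one_or (c : ℕ) : flipParity c = c + 1 ∨ c = flipParity c + 1 := by
  unfold flipParity
  split_ifs with hc
  · exact Or.inl rfl
  · obtain ⟨k, rfl⟩ := Nat.not_even_iff_odd.mp hc
    exact Or.inr (by omega)

theorem flipParity_flipParity (c : ℕ) : flipParity (flipParity c) = c := by
  rcases Nat.even_or_odd c with hc | ⟨k, rfl⟩
  · simp [flipParity, hc, Nat.even_add_one]
  · simp [flipParity]

/-- `c` is an admissible but improper color for `b = ⌊l/2⌋`: the color `2k` is proper exactly
when `l = 4k` or `l = 4k + 1`, i.e. when `⌊l/2⌋ = 2k`. -/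
def ImproperColor (b c : ℕ) : Prop := c ≤ b ∧ ¬ (Even c ∧ c = b)

theorem ImproperColor.flipParity {b c : ℕ} (h : ImproperColor b c) :
    ImproperColor b (flipParity c) := by
  obtain ⟨hle, hne⟩ := h
  unfold _root_.flipParity
  split_ifs with hc
  · have : c ≠ b := fun h' => hne ⟨hc, h'⟩
    exact ⟨by omega, fun h' => Nat.even_add_one.mp h'.1 hc⟩
  · exact ⟨by omega, fun h' => by obtain ⟨k, rfl⟩ := Nat.not_even_iff_odd.mp hc; omega⟩

namespace BinTree

theorem mem_vertices {t : BinTree} {p : List Bool} :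
    p ∈ t.vertices ↔ (t.subtreeAt p).isSome := by
  induction t generalizing p with
  | leaf => cases p <;> simp [vertices, subtreeAt]
  | node l r ihl ihr =>
      rcases p with _ | ⟨_ | _, q⟩ <;> simp [vertices, subtreeAt, ← ihl, ← ihr]

theorem nodup_vertices (t : BinTree) : t.vertices.Nodup := by
  induction t with
  | leaf => simp [vertices]
  | node l r ihl ihr =>
      refine List.nodup_cons.mpr ⟨by simp, ?_⟩
      refine (ihl.map List.cons_injective).append (ihr.map List.cons_injective) ?_
      simp [List.disjoint_right]

theorem leftLen_le_internals (t : BinTree) : t.leftLen ≤ t.internals := by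
  induction t with
  | leaf => rfl
  | node l r ihl _ => simp only [leftLen, internals]; omega

theorem length_add_internals_le {t s : BinTree} {p : List Bool} (h : t.subtreeAt p = some s) :
    p.length + s.internals ≤ t.internals := by
  induction p generalizing t with
  | nil => simp only [subtreeAt, Option.some.injEq] at h; simp [h]
  | cons b q ih =>
      rcases t with _ | ⟨l, r⟩
      · cases h
      · cases b <;> have := ih h <;> simp only [List.length_cons, internals] <;> omega

theorem length_le_internals_of_isInitial {t : BinTree} {p : List Bool} (h : t.IsInitial p) :
    p.length ≤ t.internals := by
  obtain ⟨s, hs⟩ := Option.isSome_iff_exists.mp h.1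
  have := length_add_internals_le hs
  omega

theorem pathLen_le_internals (t : BinTree) (p : List Bool) : t.pathLen p ≤ t.internals := by
  unfold pathLen
  split
  · rename_i s hs
    have := length_add_internals_le hs
    have := leftLen_le_internals s
    omega
  · exact Nat.zero_le _

theorem finite_setOf_internals_le (n : ℕ) : {t : BinTree | t.internals ≤ n}.Finite := by
  induction n with
  | zero =>
      refine (Set.finite_singleton leaf).subset ?_
      rintro (_ | ⟨l, r⟩) ht
      · rfl
      · simp [internals] at ht
  | succ n ih =>
      refine ((Set.finite_singleton leaf).union (ih.image2 node ih)).subset ?_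
      rintro (_ | ⟨l, r⟩) ht
      · exact Or.inl rfl
      · simp only [Set.mem_ofPred_eq, internals] at ht
        exact Or.inr ⟨l, by simp only [Set.mem_ofPred_eq]; omega,
          r, by simp only [Set.mem_ofPred_eq]; omega, rfl⟩

def ImproperColorAt (t : BinTree) (p : List Bool) (c : ℕ) : Prop :=
  t.IsInitial p ∧ ImproperColor (t.pathLen p / 2) c

theorem improperColorAt_flipParity (t : BinTree) :
    ∀ p c, t.ImproperColorAt p c → t.ImproperColorAt p (flipParity c) :=
  fun _ _ h => ⟨h.1, h.2.flipParity⟩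

end BinTree

theorem card_even_sub_card_odd_eq {X : Type*} (S P : X → Prop) (w : X → ℕ)
    [Finite {x // S x}] (hP : ∀ x, P x → Even (w x))
    (φ : {x // S x ∧ ¬ P x} → {x // S x ∧ ¬ P x}) (hφ : Involutive φ)
    (hw : ∀ x, w (φ x) = w x + 1 ∨ w x = w (φ x) + 1) :
    (Nat.card {x // S x ∧ Even (w x)} : ℤ) - Nat.card {x // S x ∧ Odd (w x)} =
      Nat.card {x // S x ∧ P x} := by
  classical
  have hfin (Q : X → Prop) (hQ : ∀ x, Q x → S x) : Finite {x // Q x} :=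
    Finite.of_injective _ (Subtype.impEmbedding _ _ hQ).injective
  have := hfin (fun x => S x ∧ P x) fun _ h => h.1
  have := hfin (fun x => (S x ∧ ¬ P x) ∧ Even (w x)) fun _ h => h.1.1
  have heven : Nat.card {x // S x ∧ Even (w x)} =
      Nat.card {x // S x ∧ P x} + Nat.card {x // (S x ∧ ¬ P x) ∧ Even (w x)} := by
    rw [← Nat.card_sum]
    refine Nat.card_congr ((Equiv.sumCompl fun x : {x // S x ∧ Even (w x)} => P x).symm.trans
      (Equiv.sumCongr ?_ ?_))
    · exact (Equiv.subtypeSubtypeEquivSubtypeInter _ P).trans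
        (Equiv.subtypeEquivRight fun x => ⟨fun h => ⟨h.1.1, h.2⟩, fun h => ⟨⟨h.1, hP x h.2⟩, h.2⟩⟩)
    · exact (Equiv.subtypeSubtypeEquivSubtypeInter _ (¬ P ·)).trans
        (Equiv.subtypeEquivRight fun x => by tauto)
  have hodd : Nat.card {x // S x ∧ Odd (w x)} = Nat.card {x // (S x ∧ ¬ P x) ∧ Odd (w x)} :=
    Nat.card_congr <| Equiv.subtypeEquivRight fun x =>
      ⟨fun h => ⟨⟨h.1, fun hx => Nat.not_odd_iff_even.mpr (hP x hx) h.2⟩, h.2⟩,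
        fun h => ⟨h.1.1, h.2⟩⟩
  have hswap : Nat.card {x // (S x ∧ ¬ P x) ∧ Even (w x)} =
      Nat.card {x // (S x ∧ ¬ P x) ∧ Odd (w x)} := by
    refine Nat.card_congr <| (Equiv.subtypeSubtypeEquivSubtypeInter _ _).symm.trans <|
      ((hφ.toPerm φ).subtypeEquiv fun y => ?_).trans (Equiv.subtypeSubtypeEquivSubtypeInter _ _)
    rcases hw y with h | h <;>
      simp [Involutive.coe_toPerm, h, Nat.even_add_one, ← Nat.not_even_iff_odd]
  rw [heven, hodd, hswap]
  push_cast
  ring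

namespace ColoredBinTree

theorem ext {B B' : ColoredBinTree} (htree : B.tree = B'.tree) (hcolor : B.color = B'.color) :
    B = B' := by
  obtain ⟨t, c, _, _⟩ := B
  obtain ⟨t', c', _, _⟩ := B'
  cases htree
  cases hcolor
  rfl

theorem properAt_iff (B : ColoredBinTree) (p : List Bool) :
    B.ProperAt p ↔ Even (B.color p) ∧ B.color p = B.tree.pathLen p / 2 := by
  constructor
  · rintro ⟨k, hc, hl | hl⟩ <;> exact ⟨⟨k, by omega⟩, by omega⟩
  · rintro ⟨⟨k, hk⟩, hl⟩
    exact ⟨k, by omega, by omega⟩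

theorem improperColorAt_iff (B : ColoredBinTree) (p : List Bool) :
    B.tree.ImproperColorAt p (B.color p) ↔ B.tree.IsInitial p ∧ ¬ B.ProperAt p := by
  rw [properAt_iff]
  exact and_congr_right fun hp => and_iff_right (B.color_le p hp)

theorem proper_iff (B : ColoredBinTree) :
    B.Proper ↔ ∀ p, ¬ B.tree.ImproperColorAt p (B.color p) := by
  simp only [Proper, improperColorAt_iff, not_and, not_not]

theorem color_le_internals (B : ColoredBinTree) (p : List Bool) :
    B.color p ≤ B.tree.internals := by
  by_cases hp : B.tree.IsInitial p
  · exact (B.color_le p hp).trans ((Nat.div_le_self _ _).trans (B.tree.pathLen_le_internals p))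
  · simp [B.color_eq_zero p hp]

theorem even_colorNum {B : ColoredBinTree} (h : B.Proper) : Even B.colorNum := by
  refine even_iff_two_dvd.mpr (List.dvd_sum fun c hc => ?_)
  obtain ⟨p, -, rfl⟩ := List.mem_map.mp hc
  by_cases hp : B.tree.IsInitial p
  · obtain ⟨k, hk, -⟩ := h p hp
    exact ⟨k, hk⟩
  · simp [B.color_eq_zero p hp]

theorem finite_setOf_internals_le (n : ℕ) :
    {B : ColoredBinTree | B.tree.internals ≤ n}.Finite := by
  have := (List.finite_length_le Bool n).to_subtype
  let restrict (B : ColoredBinTree) : BinTree × ({p : List Bool | p.length ≤ n} → ℕ) :=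
    (B.tree, fun p => B.color p)
  refine Set.Finite.of_finite_image (f := restrict) ?_ ?_
  · refine ((BinTree.finite_setOf_internals_le n).prod
      (Set.Finite.pi (t := fun _ => Set.Iic n) fun _ => Set.finite_Iic n)).subset ?_
    rintro _ ⟨B, hB, rfl⟩
    exact ⟨hB, fun p _ => (B.color_le_internals p).trans hB⟩
  · intro B hB B' hB' h
    obtain ⟨htree, hcolor⟩ := Prod.mk.inj h
    refine ext htree (funext fun p => ?_)
    by_cases hp : p.length ≤ n
    · exact congrFun hcolor ⟨p, hp⟩
    -- paths longer than `n` are not vertices, so both colors are the junk value `0`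
    have hB : ¬ B.tree.IsInitial p := fun hi =>
      hp ((BinTree.length_le_internals_of_isInitial hi).trans hB)
    have hB' : ¬ B'.tree.IsInitial p := fun hi =>
      hp ((BinTree.length_le_internals_of_isInitial hi).trans hB')
    rw [B.color_eq_zero p hB, B'.color_eq_zero p hB']

open Classical in
noncomputable def toggle (B : ColoredBinTree) : ColoredBinTree where
  tree := B.tree
  color := updateFirst B.tree.vertices B.tree.ImproperColorAt (fun _ => flipParity) B.color
  color_le p hp := by
    rcases updateFirst_apply_eq_or B.tree.vertices B.tree.ImproperColorAt
      (fun _ => flipParity) B.color p with h | ⟨hbad, h⟩ <;> rw [h]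
    · exact B.color_le p hp
    · exact hbad.2.flipParity.1
  color_eq_zero p hp := by
    rcases updateFirst_apply_eq_or B.tree.vertices B.tree.ImproperColorAt
      (fun _ => flipParity) B.color p with h | ⟨hbad, -⟩
    · rw [h, B.color_eq_zero p hp]
    · exact absurd hbad.1 hp

theorem toggle_tree (B : ColoredBinTree) : B.toggle.tree = B.tree := rfl

theorem proper_toggle_iff (B : ColoredBinTree) : B.toggle.Proper ↔ B.Proper := by
  classical
  rw [proper_iff, proper_iff]
  exact forall_congr' fun p =>
    not_congr (bad_updateFirst_iff (B.tree.improperColorAt_flipParity) B.color p)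

theorem toggle_toggle (B : ColoredBinTree) : B.toggle.toggle = B := by
  classical
  exact ext rfl (updateFirst_updateFirst (B.tree.improperColorAt_flipParity)
    (fun _ c _ => flipParity_flipParity c) B.color)

theorem colorNum_toggle {B : ColoredBinTree} (h : ¬ B.Proper) :
    B.toggle.colorNum = B.colorNum + 1 ∨ B.colorNum = B.toggle.colorNum + 1 := by
  classical
  have hbad : ∃ p ∈ B.tree.vertices, B.tree.ImproperColorAt p (B.color p) := by
    obtain ⟨p, hp⟩ := not_forall_not.mp ((not_congr (proper_iff B)).mp h)
    exact ⟨p, BinTree.mem_vertices.mpr hp.1.1, hp⟩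
  obtain ⟨p, hp, -, hcolor⟩ := exists_updateFirst_eq_update (g := fun _ => flipParity) hbad
  have hsum (f : List Bool → ℕ) :
      (B.tree.vertices.map f).sum = ∑ q ∈ B.tree.vertices.toFinset, f q :=
    (List.sum_toFinset f B.tree.nodup_vertices).symm
  simp only [colorNum, toggle_tree, hsum]
  rw [show B.toggle.color = _ from hcolor]
  exact sum_update_eq_add_one_or (List.mem_toFinset.mpr hp) _ (flipParity_eq_add_one_or _)

end ColoredBinTree

section Forest

open ColoredBinTree

variable {m : ℕ}

open Classical in
noncomputable def toggleForest (F : Fin m → ColoredBinTree) : Fin m → ColoredBinTree :=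
  updateFirst (List.finRange m) (fun _ B => ¬ B.Proper) (fun _ => toggle) F

theorem tree_toggleForest (F : Fin m → ColoredBinTree) (i : Fin m) :
    (toggleForest F i).tree = (F i).tree := by
  classical
  rcases updateFirst_apply_eq_or (List.finRange m) (fun _ B => ¬ B.Proper) (fun _ => toggle) F i
    with h | ⟨-, h⟩
  · rw [toggleForest, h]
  · rw [toggleForest, h, toggle_tree]

theorem proper_toggleForest_iff (F : Fin m → ColoredBinTree) (i : Fin m) :
    (toggleForest F i).Proper ↔ (F i).Proper := by
  classical
  exact not_iff_not.mp (bad_updateFirst_iff (fun (_ : Fin m) B => mt (proper_toggle_iff B).mp) F i)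

theorem toggleForest_toggleForest (F : Fin m → ColoredBinTree) :
    toggleForest (toggleForest F) = F := by
  classical
  exact updateFirst_updateFirst (fun (_ : Fin m) B => mt (proper_toggle_iff B).mp)
    (fun _ B _ => toggle_toggle B) F

theorem sum_colorNum_toggleForest {F : Fin m → ColoredBinTree} (h : ¬ ∀ i, (F i).Proper) :
    ∑ i, (toggleForest F i).colorNum = ∑ i, (F i).colorNum + 1 ∨
      ∑ i, (F i).colorNum = ∑ i, (toggleForest F i).colorNum + 1 := by
  classical
  obtain ⟨i, -, hi, hF⟩ := exists_updateFirst_eq_update (f := F) (bad := fun _ B => ¬ B.Proper)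
    (g := fun _ => toggle)
    (by simpa using h : ∃ i ∈ List.finRange m, ¬ (F i).Proper)
  have hcolorNum : (fun j => (toggleForest F j).colorNum) =
      update (fun j => (F j).colorNum) i (F i).toggle.colorNum := by
    rw [toggleForest, hF]
    funext j
    rcases eq_or_ne j i with rfl | hne <;> simp [update_of_ne, *]
  rw [hcolorNum]
  exact sum_update_eq_add_one_or (Finset.mem_univ i) _ (colorNum_toggle hi)

theorem even_sum_colorNum {F : Fin m → ColoredBinTree} (h : ∀ i, (F i).Proper) :
    Even (∑ i, (F i).colorNum) :=
  Finset.even_sum _ fun i _ => even_colorNum (h i)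

instance finite_forests (n : ℕ) :
    Finite {F : Fin m → ColoredBinTree // ∑ i, (F i).tree.internals = n} := by
  refine Set.Finite.subset
    (Set.Finite.pi (t := fun _ => {B : ColoredBinTree | B.tree.internals ≤ n})
      fun _ => finite_setOf_internals_le n) ?_ |>.to_subtype
  intro F hF i _
  exact hF ▸ Finset.single_le_sum (f := fun j => (F j).tree.internals) (by simp) (Finset.mem_univ i)

end Forest

theorem parity_reversing_involution_forests_general (m : ℕ) (n : ℕ) :
    (∃ φ : {F : Fin m → ColoredBinTree //
          ∑ i, (F i).tree.internals = n ∧ ¬ ∀ i, (F i).Proper} →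
        {F : Fin m → ColoredBinTree //
          ∑ i, (F i).tree.internals = n ∧ ¬ ∀ i, (F i).Proper},
      Function.Involutive φ ∧
        ∀ F, (∑ i, ((φ F).1 i).colorNum = (∑ i, (F.1 i).colorNum) + 1 ∨
          ∑ i, (F.1 i).colorNum = (∑ i, ((φ F).1 i).colorNum) + 1)) ∧
    (Nat.card {F : Fin m → ColoredBinTree //
          ∑ i, (F i).tree.internals = n ∧ Even (∑ i, (F i).colorNum)} : ℤ) -
        (Nat.card {F : Fin m → ColoredBinTree //
          ∑ i, (F i).tree.internals = n ∧ Odd (∑ i, (F i).colorNum)} : ℤ) =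
      Nat.card {F : Fin m → ColoredBinTree //
          ∑ i, (F i).tree.internals = n ∧ ∀ i, (F i).Proper} := by
  let φ : {F : Fin m → ColoredBinTree // ∑ i, (F i).tree.internals = n ∧ ¬ ∀ i, (F i).Proper} →
      {F : Fin m → ColoredBinTree // ∑ i, (F i).tree.internals = n ∧ ¬ ∀ i, (F i).Proper} :=
    fun F => ⟨toggleForest F.1, by simpa only [tree_toggleForest] using F.2.1,
      by simpa only [proper_toggleForest_iff] using F.2.2⟩
  have hφ : Involutive φ := fun F => Subtype.ext (toggleForest_toggleForest F.1)
  have hcolorNum (F) : ∑ i, ((φ F).1 i).colorNum = ∑ i, (F.1 i).colorNum + 1 ∨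
      ∑ i, (F.1 i).colorNum = ∑ i, ((φ F).1 i).colorNum + 1 :=
    sum_colorNum_toggleForest F.2.2
  exact ⟨⟨φ, hφ, hcolorNum⟩, card_even_sub_card_odd_eq _ _ _ (fun _ => even_sum_colorNum) φ hφ
    hcolorNum⟩

/-- **A parity-reversing involution on improper forests of colored binary trees.**
For all positive integers `m` and nonnegative integers `n`, there is an involution `φ`
on the set of improper forests of `m` colored binary trees with `n` internal vertices in
total which changes the color number by exactly `1` (hence reverses its parity);
consequently, the number of such forests with even color number minus the number of such
forests with odd color number equals the number of proper forests of `m` colored binary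
trees with `n` internal vertices in total. -/
theorem parity_reversing_involution_forests (m : ℕ) (hm : 0 < m) (n : ℕ) :
    (∃ φ : {F : Fin m → ColoredBinTree //
          ∑ i, (F i).tree.internals = n ∧ ¬ ∀ i, (F i).Proper} →
        {F : Fin m → ColoredBinTree //
          ∑ i, (F i).tree.internals = n ∧ ¬ ∀ i, (F i).Proper},
      Function.Involutive φ ∧
        ∀ F, (∑ i, ((φ F).1 i).colorNum = (∑ i, (F.1 i).colorNum) + 1 ∨
          ∑ i, (F.1 i).colorNum = (∑ i, ((φ F).1 i).colorNum) + 1)) ∧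
    (Nat.card {F : Fin m → ColoredBinTree //
          ∑ i, (F i).tree.internals = n ∧ Even (∑ i, (F i).colorNum)} : ℤ) -
        (Nat.card {F : Fin m → ColoredBinTree //
          ∑ i, (F i).tree.internals = n ∧ Odd (∑ i, (F i).colorNum)} : ℤ) =
      Nat.card {F : Fin m → ColoredBinTree //
          ∑ i, (F i).tree.internals = n ∧ ∀ i, (F i).Proper} :=
  parity_reversing_involution_forests_general m n
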